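/- arXiv:1505.06925 — 8 statements merged into one kernel-verified Lean document; each statement's English description precedes it below -/
import Mathlib

section
/- If the density g(x) of Y is decreasing on (0,∞), then for all (t₁,t₂) ∈ D: −m_X(t₁,t₂) ln h₁^Y(t₁,t₂) ≤ H^w_{X,Y}(t₁,t₂) ≤ −m_X(t₁,t₂) ln h₂^Y(t₁,t₂). If g is increasing, the inequalities are reversed. -/
open MeasureTheory Real

/-- Interval inaccuracy measure H_{X,Y}(t₁,t₂). -/
noncomputable def inacc (f F g G : ℝ → ℝ) (t₁ t₂ : ℝ) : ℝ :=
  -∫ x in t₁..t₂, f x / (F t₂ - F t₁) * Real.log (g x / (G t₂ - G t₁))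

/-- Weighted interval inaccuracy measure H^w_{X,Y}(t₁,t₂). -/
noncomputable def wInacc (f F g G : ℝ → ℝ) (t₁ t₂ : ℝ) : ℝ :=
  -∫ x in t₁..t₂, x * (f x / (F t₂ - F t₁)) * Real.log (g x / (G t₂ - G t₁))

/-- General conditional mean m_X(t₁,t₂) = E(X | t₁ < X < t₂). -/
noncomputable def gcm (f F : ℝ → ℝ) (t₁ t₂ : ℝ) : ℝ :=
  (∫ x in t₁..t₂, x * f x) / (F t₂ - F t₁)

/-- First generalized failure rate h₁(t₁,t₂) = g(t₁)/(G(t₂)-G(t₁)). -/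
noncomputable def gfr₁ (g G : ℝ → ℝ) (t₁ t₂ : ℝ) : ℝ := g t₁ / (G t₂ - G t₁)

/-- Second generalized failure rate h₂(t₁,t₂) = g(t₂)/(G(t₂)-G(t₁)). -/
noncomputable def gfr₂ (g G : ℝ → ℝ) (t₁ t₂ : ℝ) : ℝ := g t₂ / (G t₂ - G t₁)

private lemma key_bounds (f F g G : ℝ → ℝ) (t₁ t₂ : ℝ)
    (ht₁ : 0 < t₁) (ht : t₁ < t₂)
    (hFlt : F t₁ < F t₂) (hGlt : G t₁ < G t₂)
    (hF : ∀ x, HasDerivAt F (f x) x) (hG : ∀ x, HasDerivAt G (g x) x)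
    (hfpos : ∀ x, 0 ≤ f x)
    (a b : ℝ) (hb : 0 < b)
    (hlb : ∀ x ∈ Set.Icc t₁ t₂, b ≤ g x)
    (hub : ∀ x ∈ Set.Icc t₁ t₂, g x ≤ a) :
    -gcm f F t₁ t₂ * Real.log (a / (G t₂ - G t₁)) ≤ wInacc f F g G t₁ t₂ ∧
    wInacc f F g G t₁ t₂ ≤ -gcm f F t₁ t₂ * Real.log (b / (G t₂ - G t₁)) := by
  set ΔF := F t₂ - F t₁ with hΔF
  set ΔG := G t₂ - G t₁ with hΔG
  have hΔFpos : 0 < ΔF := by simp [hΔF, hFlt]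
  have hΔGpos : 0 < ΔG := by simp [hΔG, hGlt]
  have hfm : Measurable f := by
    have : f = deriv F := funext fun x => ((hF x).deriv).symm
    rw [this]; exact measurable_deriv F
  have hgm : Measurable g := by
    have : g = deriv G := funext fun x => ((hG x).deriv).symm
    rw [this]; exact measurable_deriv G
  -- integrability of f
  have hfint : IntervalIntegrable f volume t₁ t₂ :=
    intervalIntegral.intervalIntegrable_deriv_of_nonneg
      (fun x _ => (hF x).continuousAt.continuousWithinAt)
      (fun x _ => hF x) (fun x _ => hfpos x)
  -- the weight function
  set w : ℝ → ℝ := fun x => x * (f x / ΔF) with hw_def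
  have hwint : IntervalIntegrable w volume t₁ t₂ := by
    have h1 : IntervalIntegrable (fun x => (x / ΔF) * f x) volume t₁ t₂ :=
      hfint.continuousOn_mul ((continuous_id.div_const ΔF).continuousOn)
    have : (fun x => (x / ΔF) * f x) = w := by funext x; simp [hw_def]; ring
    rwa [this] at h1
  have hwnonneg : ∀ x ∈ Set.Icc t₁ t₂, 0 ≤ w x := fun x hx =>
    mul_nonneg (le_of_lt (lt_of_lt_of_le ht₁ hx.1)) (div_nonneg (hfpos x) hΔFpos.le)
  -- bounds on the log term
  have ha : 0 < a := lt_of_lt_of_le hb (le_trans (hlb t₁ ⟨le_refl _, ht.le⟩)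
    (hub t₁ ⟨le_refl _, ht.le⟩))
  have hlogle : ∀ x ∈ Set.Icc t₁ t₂,
      Real.log (b / ΔG) ≤ Real.log (g x / ΔG) ∧ Real.log (g x / ΔG) ≤ Real.log (a / ΔG) := by
    intro x hx
    have hgx : 0 < g x := lt_of_lt_of_le hb (hlb x hx)
    refine ⟨Real.log_le_log (div_pos hb hΔGpos) ?_,
      Real.log_le_log (div_pos hgx hΔGpos) ?_⟩
    · gcongr
      exact hlb x hx
    · gcongr
      exact hub x hx
  -- integrability of the main integrand
  set L : ℝ → ℝ := fun x => w x * Real.log (g x / ΔG) with hL_def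
  set M : ℝ := max |Real.log (a / ΔG)| |Real.log (b / ΔG)| with hM_def
  have hLm : Measurable L :=
    (measurable_id.mul (hfm.div_const ΔF)).mul (Real.measurable_log.comp (hgm.div_const ΔG))
  have hMwint : IntervalIntegrable (fun x => M * w x) volume t₁ t₂ := hwint.const_mul M
  have hLint : IntervalIntegrable L volume t₁ t₂ := by
    apply hMwint.mono_fun hLm.aestronglyMeasurable.restrict
    filter_upwards [ae_restrict_mem measurableSet_uIoc] with x hx
    have hx' : x ∈ Set.Icc t₁ t₂ := by
      rw [Set.uIoc_of_le ht.le] at hx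
      exact ⟨hx.1.le, hx.2⟩
    have hlog : |Real.log (g x / ΔG)| ≤ M := by
      rw [abs_le]
      constructor
      · calc -M ≤ -|Real.log (b / ΔG)| := by simp [hM_def]
          _ ≤ Real.log (b / ΔG) := neg_abs_le _
          _ ≤ _ := (hlogle x hx').1
      · calc Real.log (g x / ΔG) ≤ Real.log (a / ΔG) := (hlogle x hx').2
          _ ≤ |Real.log (a / ΔG)| := le_abs_self _
          _ ≤ M := le_max_left _ _
    have hwz : 0 ≤ w x := hwnonneg x hx'
    calc ‖L x‖ = w x * |Real.log (g x / ΔG)| := by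
          simp [hL_def, abs_mul, abs_of_nonneg hwz]
      _ ≤ w x * M := mul_le_mul_of_nonneg_left hlog hwz
      _ ≤ ‖M * w x‖ := by rw [mul_comm]; exact le_abs_self _
  -- value of ∫ w
  have hwval : ∫ x in t₁..t₂, w x = gcm f F t₁ t₂ := by
    have : (fun x => w x) = fun x => (x * f x) / ΔF := by
      funext x; simp [hw_def]; ring
    rw [this, intervalIntegral.integral_div]
    rfl
  -- main inequalities
  have hupper : ∫ x in t₁..t₂, L x ≤ gcm f F t₁ t₂ * Real.log (a / ΔG) := by
    calc ∫ x in t₁..t₂, L x ≤ ∫ x in t₁..t₂, w x * Real.log (a / ΔG) := by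
          apply intervalIntegral.integral_mono_on ht.le hLint (hwint.mul_const _)
          intro x hx
          exact mul_le_mul_of_nonneg_left (hlogle x hx).2 (hwnonneg x hx)
      _ = gcm f F t₁ t₂ * Real.log (a / ΔG) := by
          rw [intervalIntegral.integral_mul_const, hwval]
  have hlower : gcm f F t₁ t₂ * Real.log (b / ΔG) ≤ ∫ x in t₁..t₂, L x := by
    calc gcm f F t₁ t₂ * Real.log (b / ΔG)
        = ∫ x in t₁..t₂, w x * Real.log (b / ΔG) := by
          rw [intervalIntegral.integral_mul_const, hwval]
      _ ≤ ∫ x in t₁..t₂, L x := by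
          apply intervalIntegral.integral_mono_on ht.le (hwint.mul_const _) hLint
          intro x hx
          exact mul_le_mul_of_nonneg_left (hlogle x hx).1 (hwnonneg x hx)
  have hwI : wInacc f F g G t₁ t₂ = -∫ x in t₁..t₂, L x := rfl
  constructor
  · rw [hwI, neg_mul]; exact neg_le_neg hupper
  · rw [hwI, neg_mul]; exact neg_le_neg hlower

theorem stmt6 (f F g G : ℝ → ℝ) (t₁ t₂ : ℝ)
    (ht₁ : 0 < t₁) (ht : t₁ < t₂)
    (hD : F t₁ < F t₂ ∧ G t₁ < G t₂)              -- (t₁,t₂) ∈ D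
    (hF : ∀ x, HasDerivAt F (f x) x) (hG : ∀ x, HasDerivAt G (g x) x)
    (hfpos : ∀ x, 0 ≤ f x) (hgpos : ∀ x, 0 < x → 0 < g x) :
    (AntitoneOn g (Set.Ioi 0) →
      -gcm f F t₁ t₂ * Real.log (gfr₁ g G t₁ t₂) ≤ wInacc f F g G t₁ t₂ ∧
      wInacc f F g G t₁ t₂ ≤ -gcm f F t₁ t₂ * Real.log (gfr₂ g G t₁ t₂)) ∧
    (MonotoneOn g (Set.Ioi 0) →
      -gcm f F t₁ t₂ * Real.log (gfr₂ g G t₁ t₂) ≤ wInacc f F g G t₁ t₂ ∧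
      wInacc f F g G t₁ t₂ ≤ -gcm f F t₁ t₂ * Real.log (gfr₁ g G t₁ t₂)) := by
  obtain ⟨hFlt, hGlt⟩ := hD
  constructor
  · intro hanti
    have := key_bounds f F g G t₁ t₂ ht₁ ht hFlt hGlt hF hG hfpos (g t₁) (g t₂)
      (hgpos t₂ (ht₁.trans ht))
      (fun x hx => hanti (Set.mem_Ioi.2 (ht₁.trans_le hx.1)) (Set.mem_Ioi.2 (ht₁.trans ht)) hx.2)
      (fun x hx => hanti (Set.mem_Ioi.2 ht₁) (Set.mem_Ioi.2 (ht₁.trans_le hx.1)) hx.1)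
    simpa [gfr₁, gfr₂] using this
  · intro hmono
    have := key_bounds f F g G t₁ t₂ ht₁ ht hFlt hGlt hF hG hfpos (g t₂) (g t₁)
      (hgpos t₁ ht₁)
      (fun x hx => hmono (Set.mem_Ioi.2 ht₁) (Set.mem_Ioi.2 (ht₁.trans_le hx.1)) hx.1)
      (fun x hx => hmono (Set.mem_Ioi.2 (ht₁.trans_le hx.1)) (Set.mem_Ioi.2 (ht₁.trans ht)) hx.2)
    simpa [gfr₁, gfr₂] using this
end

section
/- For fixed t₂, if t₁ ↦ h₁^Y(t₁,t₂) is increasing in t₁, then H^w_{X,Y}(t₁,t₂) ≤ −m_X(t₁,t₂) ln h₁^Y(t₁,t₂) − ∫_{t₁}^{t₂} [x f(x)/(F(t₂)−F(t₁))] ln[(G(t₂)−G(x))/(G(t₂)−G(t₁))] dx. -/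
open MeasureTheory Real

/-!
Monotonicity of the hazard `x ↦ g x / (G t₂ - G x)` gives `g x ≥ h₁(t₁,t₂) (G t₂ - G x)` on
`(t₁, t₂)`; taking logarithms and integrating against `x f(x) / (F t₂ - F t₁)` gives the
inequality, once both logarithmic integrands are known to be integrable (otherwise their
integrals are junk `0`). For that: since `g t₂ > 0`, `G t₂ - G x` is comparable to `t₂ - x`;
comparing `x` with the midpoint of `[x, t₂]` shows that an increasing hazard keeps `g` bounded
near `t₂`; so both logarithms are `O(1 + |log (t₂ - x)|)`. Finally `f(x) log (t₂ - x)` is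
integrable because `F t₂ - F x = O(t₂ - x)`, by an integration by parts.
-/

open Set Filter Topology

section SlopeBounds

variable {G : ℝ → ℝ} {a b d : ℝ}

-- Compactness of `[a, b]` bounds this extended difference quotient on both sides.
theorem continuousOn_update_slope (hG : ContinuousOn G (Icc a b)) (hd : HasDerivAt G d b) :
    ContinuousOn (Function.update (slope G b) b d) (Icc a b) := by
  intro x hx
  rcases eq_or_ne x b with rfl | hxb
  · exact (continuousAt_update_same.2 (hasDerivAt_iff_tendsto_slope.1 hd)).continuousWithinAt
  · have hslope : ContinuousWithinAt (slope G b) (Icc a b) x := by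
      simp only [slope_fun_def_field]
      exact ((hG x hx).sub continuousWithinAt_const).div
        (continuousWithinAt_id.sub continuousWithinAt_const) (sub_ne_zero.2 hxb)
    refine hslope.congr_of_eventuallyEq ?_ (Function.update_of_ne hxb _ _)
    filter_upwards [nhdsWithin_le_nhds (isOpen_ne.mem_nhds hxb)] with y hy
    exact Function.update_of_ne hy _ _

theorem exists_sub_le_mul_sub_of_hasDerivAt (hG : ContinuousOn G (Icc a b))
    (hd : HasDerivAt G d b) : ∃ L, ∀ x ∈ Icc a b, G b - G x ≤ L * (b - x) := by
  obtain ⟨L, hL⟩ := isCompact_Icc.bddAbove_image (continuousOn_update_slope hG hd)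
  refine ⟨L, fun x hx => ?_⟩
  rcases hx.2.eq_or_lt with rfl | hxb
  · simp
  · have hLx := hL (mem_image_of_mem _ hx)
    rw [Function.update_of_ne hxb.ne, slope_def_field, div_le_iff_of_neg (sub_neg.2 hxb)] at hLx
    linarith

theorem exists_pos_mul_sub_le_sub_of_hasDerivAt (hab : a ≤ b) (hG : ContinuousOn G (Icc a b))
    (hd : HasDerivAt G d b) (hd₀ : 0 < d) (hlt : ∀ x ∈ Ico a b, G x < G b) :
    ∃ ε > 0, ∀ x ∈ Icc a b, ε * (b - x) ≤ G b - G x := by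
  obtain ⟨x₀, hx₀, hmin⟩ :=
    isCompact_Icc.exists_isMinOn (nonempty_Icc.2 hab) (continuousOn_update_slope hG hd)
  have hslope_pos : ∀ x ∈ Ico a b, 0 < slope G b x := fun x hx => by
    rw [slope_def_field]
    exact div_pos_of_neg_of_neg (sub_neg.2 (hlt x hx)) (sub_neg.2 hx.2)
  refine ⟨Function.update (slope G b) b d x₀, ?_, fun x hx => ?_⟩
  · rcases hx₀.2.eq_or_lt with rfl | hx₀b
    · simpa using hd₀
    · simpa [Function.update_of_ne hx₀b.ne] using hslope_pos x₀ ⟨hx₀.1, hx₀b⟩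
  · rcases hx.2.eq_or_lt with rfl | hxb
    · simp
    · have hεx := hmin hx
      rw [mem_ofPred_eq, Function.update_of_ne hxb.ne, slope_def_field,
        le_div_iff_of_neg (sub_neg.2 hxb)] at hεx
      linarith

end SlopeBounds

section Hazard

variable {G g : ℝ → ℝ}

theorem hazard_mul_mul_sub_le_sub {y s b : ℝ} (hys : y ≤ s)
    (hG : ∀ x ∈ Icc y s, HasDerivAt G (g x) x) (hGmono : MonotoneOn G (Icc y s))
    (hh : MonotoneOn (fun x => g x / (G b - G x)) (Icc y s)) (hgy : 0 ≤ g y) (hsb : G s < G b) :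
    g y / (G b - G y) * (G b - G s) * (s - y) ≤ G s - G y := by
  have hu : ∀ x ∈ Icc y s, 0 < G b - G x := fun x hx =>
    sub_pos.2 ((hGmono hx (right_mem_Icc.2 hys) hx.2).trans_lt hsb)
  refine (convex_Icc y s).mul_sub_le_image_sub_of_le_deriv (HasDerivAt.continuousOn hG)
    (fun x hx => (hG x (interior_subset hx)).differentiableAt.differentiableWithinAt)
    (fun x hx => ?_) y (left_mem_Icc.2 hys) s (right_mem_Icc.2 hys) hys
  have hxI : x ∈ Icc y s := interior_subset hx
  rw [(hG x hxI).deriv]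
  calc g y / (G b - G y) * (G b - G s) ≤ g y / (G b - G y) * (G b - G x) :=
        mul_le_mul_of_nonneg_left (sub_le_sub_left (hGmono hxI (right_mem_Icc.2 hys) hxI.2) _)
          (div_nonneg hgy (hu y (left_mem_Icc.2 hys)).le)
    _ ≤ g x / (G b - G x) * (G b - G x) :=
        mul_le_mul_of_nonneg_right (hh (left_mem_Icc.2 hys) hxI hxI.1) (hu x hxI).le
    _ = g x := div_mul_cancel₀ _ (hu x hxI).ne'

theorem density_le_of_monotoneOn_hazard {a b ε L : ℝ}
    (hG : ∀ x ∈ Icc a b, HasDerivAt G (g x) x) (hGmono : MonotoneOn G (Icc a b))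
    (hh : MonotoneOn (fun x => g x / (G b - G x)) (Ico a b)) (hε : 0 < ε)
    (hlo : ∀ x ∈ Icc a b, ε * (b - x) ≤ G b - G x)
    (hhi : ∀ x ∈ Icc a b, G b - G x ≤ L * (b - x)) :
    ∀ y ∈ Ico a b, g y ≤ 4 * L ^ 2 / ε := by
  intro y hy
  rcases le_or_gt (g y) 0 with hgy | hgy
  · exact hgy.trans (by positivity)
  set s := (y + b) / 2 with hs
  have hr : 0 < b - y := sub_pos.2 hy.2
  have hys : y ≤ s := by linarith
  have hsb : s < b := by linarith
  have hIcc : Icc y s ⊆ Icc a b := Icc_subset_Icc hy.1 hsb.le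
  have hyI : y ∈ Icc a b := hIcc (left_mem_Icc.2 hys)
  have hsI : s ∈ Icc a b := hIcc (right_mem_Icc.2 hys)
  have hus : ε * ((b - y) / 2) ≤ G b - G s := by
    convert hlo s hsI using 2
    rw [hs]; ring
  have hus_pos : 0 < G b - G s := (mul_pos hε (half_pos hr)).trans_le hus
  have huy : 0 < G b - G y := (mul_pos hε hr).trans_le (hlo y hyI)
  have hgrowth := hazard_mul_mul_sub_le_sub hys (fun x hx => hG x (hIcc hx)) (hGmono.mono hIcc)
    (hh.mono fun x hx => ⟨(hIcc hx).1, hx.2.trans_lt hsb⟩) hgy.le (sub_pos.1 hus_pos)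
  -- `g y = h(y) (G b - G y)` and `h(y) (G b - G s) (s - y) ≤ G s - G y ≤ G b - G y`
  have hsquare : g y * ((G b - G s) * (s - y)) ≤ (G b - G y) ^ 2 := by
    rw [div_mul_eq_mul_div, div_mul_eq_mul_div, div_le_iff₀ huy] at hgrowth
    nlinarith [hGmono hsI (right_mem_Icc.2 (hy.1.trans hy.2.le)) hsb.le]
  have hrate : g y * (ε * ((b - y) / 2) * ((b - y) / 2)) ≤ (L * (b - y)) ^ 2 :=
    calc g y * (ε * ((b - y) / 2) * ((b - y) / 2)) ≤ g y * ((G b - G s) * (s - y)) := by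
          gcongr
          rw [hs]; linarith
      _ ≤ (G b - G y) ^ 2 := hsquare
      _ ≤ (L * (b - y)) ^ 2 := by gcongr; exact hhi y hyI
  rw [le_div_iff₀ hε]
  nlinarith [mul_pos hr hr]

theorem exists_density_bounds_of_monotoneOn_hazard {a b : ℝ} (hab : a ≤ b)
    (hG : ∀ x ∈ Icc a b, HasDerivAt G (g x) x) (hGmono : StrictMonoOn G (Icc a b))
    (hgb : 0 < g b) (hh : MonotoneOn (fun x => g x / (G b - G x)) (Ico a b)) :
    ∃ ε > 0, ∃ M, ∀ x ∈ Ico a b, ε * (b - x) ≤ G b - G x ∧ g x ≤ M := by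
  have hGb := hG b (right_mem_Icc.2 hab)
  obtain ⟨ε, hε, hlo⟩ := exists_pos_mul_sub_le_sub_of_hasDerivAt hab
    (HasDerivAt.continuousOn hG) hGb hgb
    fun x hx => hGmono (Ico_subset_Icc_self hx) (right_mem_Icc.2 hab) hx.2
  obtain ⟨L, hhi⟩ := exists_sub_le_mul_sub_of_hasDerivAt (HasDerivAt.continuousOn hG) hGb
  exact ⟨ε, hε, 4 * L ^ 2 / ε, fun x hx => ⟨hlo x (Ico_subset_Icc_self hx),
    density_le_of_monotoneOn_hazard hG hGmono.monotoneOn hh hε hlo hhi x hx⟩⟩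

end Hazard

section LogSingularity

variable {F f : ℝ → ℝ} {a b L : ℝ}

theorem integrableOn_Icc_of_hasDerivAt_of_nonneg (hF : ∀ x ∈ Icc a b, HasDerivAt F (f x) x)
    (hf : ∀ x ∈ Ioo a b, 0 ≤ f x) : IntegrableOn f (Icc a b) :=
  (integrableOn_Icc_iff_integrableOn_Ioc (by simp)).2 <|
    intervalIntegral.integrableOn_deriv_of_nonneg (HasDerivAt.continuousOn hF)
      (fun x hx => hF x (Ioo_subset_Icc_self hx)) hf

theorem hasDerivAt_log_sub_sub_log_sub {x : ℝ} (hx : x < b) :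
    HasDerivAt (fun y => log (b - a) - log (b - y)) (b - x)⁻¹ x := by
  have h := ((hasDerivAt_id x).const_sub b).log (sub_ne_zero.2 hx.ne')
  simpa [div_eq_inv_mul] using h.const_sub (log (b - a))

-- Integrating by parts turns this into `∫ (F b - F x) / (b - x)`, whose integrand is at most `L`.
theorem integral_mul_log_sub_sub_log_sub_le {s : ℝ} (has : a ≤ s) (hsb : s < b)
    (hF : ∀ x ∈ Icc a b, HasDerivAt F (f x) x) (hf : ∀ x ∈ Ioo a b, 0 ≤ f x)
    (hL : ∀ x ∈ Icc a b, F b - F x ≤ L * (b - x)) :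
    ∫ x in a..s, f x * (log (b - a) - log (b - x)) ≤ L * (s - a) := by
  have hsub : Icc a s ⊆ Icc a b := Icc_subset_Icc_right hsb.le
  have hFcont : ContinuousOn F (Icc a b) := HasDerivAt.continuousOn hF
  have hFmono : MonotoneOn F (Icc a b) :=
    monotoneOn_of_hasDerivWithinAt_nonneg (convex_Icc a b) hFcont
      (fun x hx => (hF x (interior_subset hx)).hasDerivWithinAt) (by rwa [interior_Icc])
  have hfi : IntervalIntegrable f volume a s :=
    (intervalIntegrable_iff_integrableOn_Icc_of_le has).2 <|
      (integrableOn_Icc_of_hasDerivAt_of_nonneg hF hf).mono_set hsub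
  have hinv : ContinuousOn (fun x => (b - x)⁻¹) (Icc a s) :=
    (continuousOn_const.sub continuousOn_id).inv₀ fun x hx => (sub_pos.2 (hx.2.trans_lt hsb)).ne'
  have hparts := intervalIntegral.integral_mul_deriv_eq_deriv_mul
    (u := fun y => log (b - a) - log (b - y)) (v := fun y => F y - F b)
    (fun x hx => hasDerivAt_log_sub_sub_log_sub ((uIcc_of_le has ▸ hx).2.trans_lt hsb))
    (fun x hx => (hF x (hsub (uIcc_of_le has ▸ hx))).sub_const _)
    (hinv.intervalIntegrable_of_Icc has) hfi
  have hboundary : (log (b - a) - log (b - s)) * (F s - F b) ≤ 0 :=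
    mul_nonpos_of_nonneg_of_nonpos
      (sub_nonneg.2 (log_le_log (sub_pos.2 hsb) (by linarith)))
      (sub_nonpos.2 (hFmono (hsub (right_mem_Icc.2 has)) (right_mem_Icc.2 (has.trans hsb.le))
        hsb.le))
  have hquot : -L * (s - a) ≤ ∫ x in a..s, (b - x)⁻¹ * (F x - F b) := by
    have := intervalIntegral.integral_mono_on (μ := volume) has intervalIntegrable_const
      ((hinv.mul ((hFcont.mono hsub).sub continuousOn_const)).intervalIntegrable_of_Icc has)
      (fun x hx => show -L ≤ (b - x)⁻¹ * (F x - F b) by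
        rw [inv_mul_eq_div, le_div_iff₀ (sub_pos.2 (hx.2.trans_lt hsb))]
        linarith [hL x (hsub hx)])
    simpa [mul_comm] using this
  simp only [mul_comm (f _)]
  rw [hparts]
  simp only [sub_self, zero_mul, sub_zero]
  linarith

theorem integrableOn_mul_log_sub (hab : a < b)
    (hF : ∀ x ∈ Icc a b, HasDerivAt F (f x) x) (hf : ∀ x ∈ Ioo a b, 0 ≤ f x)
    (hL : ∀ x ∈ Icc a b, F b - F x ≤ L * (b - x)) :
    IntegrableOn (fun x => f x * log (b - x)) (Ioc a b) := by
  set W := fun x => log (b - a) - log (b - x)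
  have hfi := integrableOn_Icc_of_hasDerivAt_of_nonneg hF hf
  obtain ⟨s, -, hs, hs_lim⟩ := exists_seq_strictMono_tendsto' hab
  have hfW_s : ∀ n, IntegrableOn (fun x => f x * W x) (Icc a (s n)) := fun n =>
    (hfi.mono_set (Icc_subset_Icc_right (hs n).2.le)).mul_continuousOn
      (fun x hx => (hasDerivAt_log_sub_sub_log_sub (a := a) (hx.2.trans_lt (hs n).2))
        |>.continuousAt.continuousWithinAt) isCompact_Icc
  -- `f W ≥ 0` has integrals over `(a, s n]` bounded uniformly as `s n → b`
  have hfW : IntegrableOn (fun x => f x * W x) (Ioc a b) := by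
    refine integrableOn_Ioc_of_intervalIntegral_norm_bounded_right (I := |L| * (b - a))
      (fun n => (hfW_s n).mono_set Ioc_subset_Icc_self) hs_lim (Eventually.of_forall fun n => ?_)
    have hnonneg : ∀ x ∈ Ioc a (s n), 0 ≤ f x * W x := fun x hx =>
      mul_nonneg (hf x ⟨hx.1, hx.2.trans_lt (hs n).2⟩)
        (sub_nonneg.2 (log_le_log (by linarith [hx.2, (hs n).2]) (by linarith [hx.1])))
    calc ∫ x in Ioc a (s n), ‖f x * W x‖ = ∫ x in a..s n, f x * W x := by
          rw [intervalIntegral.integral_of_le (hs n).1.le]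
          exact setIntegral_congr_fun measurableSet_Ioc fun x hx => norm_of_nonneg (hnonneg x hx)
      _ ≤ L * (s n - a) := integral_mul_log_sub_sub_log_sub_le (hs n).1.le (hs n).2 hF hf hL
      _ ≤ |L| * (b - a) :=
          mul_le_mul (le_abs_self L) (by linarith [(hs n).2]) (by linarith [(hs n).1])
            (abs_nonneg L)
  refine IntegrableOn.congr_fun
    (((hfi.mono_set Ioc_subset_Icc_self).mul_const (log (b - a))).sub hfW)
    (fun x _ => by simp only [Pi.sub_apply, W]; ring) measurableSet_Ioc

end LogSingularity

theorem abs_log_le_of_mul_le_of_le {A B r v : ℝ} (hA : 0 < A) (hr : 0 < r) (hlo : A * r ≤ v)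
    (hhi : v ≤ B) : |log v| ≤ |log A| + |log B| + |log r| := by
  have hAr : 0 < A * r := mul_pos hA hr
  have hlo' : log A + log r ≤ log v := by
    rw [← log_mul hA.ne' hr.ne']
    exact log_le_log hAr hlo
  have hhi' : log v ≤ log B := log_le_log (hAr.trans_le hlo) hhi
  rw [abs_le]
  constructor <;> linarith [neg_abs_le (log A), neg_abs_le (log r), le_abs_self (log B),
    abs_nonneg (log A), abs_nonneg (log B), abs_nonneg (log r)]

theorem IntegrableOn.mul_of_abs_le {α : Type*} [MeasurableSpace α] {μ : Measure α}
    {p ℓ φ : α → ℝ} {s : Set α} {C K : ℝ} (hs : MeasurableSet s) (hp : IntegrableOn p s μ)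
    (hpℓ : IntegrableOn (fun x => p x * ℓ x) s μ) (hφ : AEStronglyMeasurable φ (μ.restrict s))
    (hbound : ∀ x ∈ s, |φ x| ≤ C * (K + |ℓ x|)) :
    IntegrableOn (fun x => p x * φ x) s μ := by
  refine Integrable.mono' (((hp.norm.const_mul K).add hpℓ.norm).const_mul C)
    (hp.aestronglyMeasurable.mul hφ) (ae_restrict_of_forall_mem hs fun x hx => ?_)
  simp only [norm_mul, Real.norm_eq_abs]
  calc |p x| * |φ x| ≤ |p x| * (C * (K + |ℓ x|)) :=
        mul_le_mul_of_nonneg_left (hbound x hx) (abs_nonneg _)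
    _ = C * (K * |p x| + |p x| * |ℓ x|) := by ring

theorem intervalIntegrable_mul_mul_log {F f v : ℝ → ℝ} {a b L A B : ℝ} (hab : a < b)
    (hF : ∀ x ∈ Icc a b, HasDerivAt F (f x) x) (hf : ∀ x ∈ Ioo a b, 0 ≤ f x)
    (hL : ∀ x ∈ Icc a b, F b - F x ≤ L * (b - x)) (hv : AEMeasurable v (volume.restrict (Ioo a b)))
    (hA : 0 < A)
    (hlo : ∀ x ∈ Ioo a b, A * (b - x) ≤ v x) (hhi : ∀ x ∈ Ioo a b, v x ≤ B) :
    IntervalIntegrable (fun x => x * f x * log (v x)) volume a b := by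
  rw [intervalIntegrable_iff_integrableOn_Ioo_of_le hab.le]
  have hfi := (integrableOn_Icc_of_hasDerivAt_of_nonneg hF hf).mono_set Ioo_subset_Icc_self
  have hbound : ∀ x ∈ Ioo a b,
      |x * log (v x)| ≤ max |a| |b| * (|log A| + |log B| + |log (b - x)|) := fun x hx => by
    rw [abs_mul]
    exact mul_le_mul (abs_le_max_abs_abs hx.1.le hx.2.le)
      (abs_log_le_of_mul_le_of_le hA (sub_pos.2 hx.2) (hlo x hx) (hhi x hx))
      (abs_nonneg _) ((abs_nonneg a).trans (le_max_left _ _))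
  refine IntegrableOn.congr_fun (IntegrableOn.mul_of_abs_le (φ := fun x => x * log (v x))
    measurableSet_Ioo hfi ((integrableOn_mul_log_sub hab hF hf hL).mono_set Ioo_subset_Ioc_self)
    (aemeasurable_id.mul hv.log).aestronglyMeasurable hbound) (fun x _ => by ring) measurableSet_Ioo

theorem integral_mul_log_add_integral_mul_log_le {w u v : ℝ → ℝ} {a b c : ℝ} (hab : a ≤ b)
    (hc : 0 < c) (hw : ∀ x ∈ Ioo a b, 0 ≤ w x) (hu : ∀ x ∈ Ioo a b, 0 < u x)
    (huv : ∀ x ∈ Ioo a b, c * u x ≤ v x) (hwi : IntervalIntegrable w volume a b)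
    (hwu : IntervalIntegrable (fun x => w x * log (u x)) volume a b)
    (hwv : IntervalIntegrable (fun x => w x * log (v x)) volume a b) :
    (∫ x in a..b, w x) * log c + ∫ x in a..b, w x * log (u x) ≤ ∫ x in a..b, w x * log (v x) := by
  rw [← intervalIntegral.integral_mul_const, ← intervalIntegral.integral_add (hwi.mul_const _) hwu]
  refine intervalIntegral.integral_mono_on_of_le_Ioo hab ((hwi.mul_const _).add hwu) hwv
    fun x hx => ?_
  rw [← mul_add, ← log_mul hc.ne' (hu x hx).ne']
  exact mul_le_mul_of_nonneg_left (log_le_log (mul_pos hc (hu x hx)) (huv x hx)) (hw x hx)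

theorem integral_mul_mul_log_add_le {F f u v : ℝ → ℝ} {a b L A B B' c : ℝ} (ha : 0 ≤ a)
    (hab : a < b) (hF : ∀ x ∈ Icc a b, HasDerivAt F (f x) x) (hf : ∀ x ∈ Ioo a b, 0 ≤ f x)
    (hL : ∀ x ∈ Icc a b, F b - F x ≤ L * (b - x))
    (hu : AEMeasurable u (volume.restrict (Ioo a b)))
    (hv : AEMeasurable v (volume.restrict (Ioo a b))) (hA : 0 < A) (hc : 0 < c)
    (hu_lo : ∀ x ∈ Ioo a b, A * (b - x) ≤ u x)
    (hu_hi : ∀ x ∈ Ioo a b, u x ≤ B) (huv : ∀ x ∈ Ioo a b, c * u x ≤ v x)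
    (hv_hi : ∀ x ∈ Ioo a b, v x ≤ B') :
    (∫ x in a..b, x * f x) * log c + ∫ x in a..b, x * f x * log (u x)
      ≤ ∫ x in a..b, x * f x * log (v x) := by
  have hv_lo : ∀ x ∈ Ioo a b, c * A * (b - x) ≤ v x := fun x hx =>
    (mul_assoc c A _).trans_le ((mul_le_mul_of_nonneg_left (hu_lo x hx) hc.le).trans (huv x hx))
  have hxf : IntervalIntegrable (fun x => x * f x) volume a b :=
    ((intervalIntegrable_iff_integrableOn_Icc_of_le hab.le).2
      (integrableOn_Icc_of_hasDerivAt_of_nonneg hF hf)).continuousOn_mul continuousOn_id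
  exact integral_mul_log_add_integral_mul_log_le hab.le hc
    (fun x hx => mul_nonneg (ha.trans hx.1.le) (hf x hx))
    (fun x hx => (mul_pos hA (sub_pos.2 hx.2)).trans_le (hu_lo x hx)) huv hxf
    (intervalIntegrable_mul_mul_log hab hF hf hL hu hA hu_lo hu_hi)
    (intervalIntegrable_mul_mul_log hab hF hf hL hv (mul_pos hc hA) hv_lo hv_hi)

theorem integral_mul_mul_log_le_of_monotoneOn_hazard {F f G g : ℝ → ℝ} {a b : ℝ} (ha : 0 ≤ a)
    (hab : a < b) (hF : ∀ x ∈ Icc a b, HasDerivAt F (f x) x) (hf : ∀ x ∈ Ioo a b, 0 ≤ f x)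
    (hG : ∀ x ∈ Icc a b, HasDerivAt G (g x) x) (hg : ∀ x ∈ Icc a b, 0 < g x)
    (hh : MonotoneOn (fun x => g x / (G b - G x)) (Ico a b)) :
    (∫ x in a..b, x * f x) * log (g a / (G b - G a))
        + ∫ x in a..b, x * f x * log ((G b - G x) / (G b - G a))
      ≤ ∫ x in a..b, x * f x * log (g x / (G b - G a)) := by
  have hbI : b ∈ Icc a b := right_mem_Icc.2 hab.le
  have hGmono : StrictMonoOn G (Icc a b) :=
    strictMonoOn_of_hasDerivWithinAt_pos (convex_Icc a b) (HasDerivAt.continuousOn hG)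
      (fun x hx => (hG x (interior_subset hx)).hasDerivWithinAt)
      fun x hx => hg x (interior_subset hx)
  have hgap : ∀ x ∈ Ico a b, 0 < G b - G x := fun x hx =>
    sub_pos.2 (hGmono (Ico_subset_Icc_self hx) hbI hx.2)
  have hΔ := hgap a (left_mem_Ico.2 hab)
  obtain ⟨ε, hε, M, hbounds⟩ :=
    exists_density_bounds_of_monotoneOn_hazard hab.le hG hGmono (hg b hbI) hh
  obtain ⟨L, hL⟩ := exists_sub_le_mul_sub_of_hasDerivAt (HasDerivAt.continuousOn hF) (hF b hbI)
  have hcuv : ∀ x ∈ Ioo a b,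
      g a / (G b - G a) * ((G b - G x) / (G b - G a)) ≤ g x / (G b - G a) := fun x hx => by
    have hx := Ioo_subset_Ico_self hx
    rw [← mul_div_assoc]
    exact div_le_div_of_nonneg_right
      ((le_div_iff₀ (hgap x hx)).1 (hh (left_mem_Ico.2 hab) hx hx.1)) hΔ.le
  have hu : AEMeasurable (fun x => (G b - G x) / (G b - G a)) (volume.restrict (Ioo a b)) :=
    ((continuousOn_const.sub ((HasDerivAt.continuousOn hG).mono Ioo_subset_Icc_self)).div_const
      _).aemeasurable measurableSet_Ioo
  have hv : AEMeasurable (fun x => g x / (G b - G a)) (volume.restrict (Ioo a b)) :=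
    ((measurable_deriv G).aemeasurable.congr (ae_restrict_of_forall_mem measurableSet_Ioo
      fun x hx => (hG x (Ioo_subset_Icc_self hx)).deriv)).div_const _
  exact integral_mul_mul_log_add_le ha hab hF hf hL hu hv (div_pos hε hΔ)
    (div_pos (hg a (left_mem_Icc.2 hab.le)) hΔ)
    (fun x hx => by
      rw [div_mul_eq_mul_div]
      exact div_le_div_of_nonneg_right (hbounds x (Ioo_subset_Ico_self hx)).1 hΔ.le)
    (fun x hx => (div_le_one hΔ).2 (by
      linarith [hGmono (left_mem_Icc.2 hab.le) (Ioo_subset_Icc_self hx) hx.1]))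
    hcuv (fun x hx => div_le_div_of_nonneg_right (hbounds x (Ioo_subset_Ico_self hx)).2 hΔ.le)

theorem stmt8 (f F g G : ℝ → ℝ) (t₁ t₂ : ℝ)
    (ht₁ : 0 < t₁) (ht : t₁ < t₂)
    (hD : F t₁ < F t₂ ∧ G t₁ < G t₂)              -- (t₁,t₂) ∈ D
    (hF : ∀ x, HasDerivAt F (f x) x) (hG : ∀ x, HasDerivAt G (g x) x)
    (hfpos : ∀ x, 0 ≤ f x) (hgpos : ∀ x, 0 < x → 0 < g x)
    -- for fixed t₂, h₁^Y(·,t₂) is increasing in t₁ on (0,t₂)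
    (hinc : MonotoneOn (fun s => gfr₁ g G s t₂) (Set.Ioo 0 t₂)) :
    wInacc f F g G t₁ t₂ ≤
      -gcm f F t₁ t₂ * Real.log (gfr₁ g G t₁ t₂)
        - ∫ x in t₁..t₂, x * f x / (F t₂ - F t₁)
            * Real.log ((G t₂ - G x) / (G t₂ - G t₁)) := by
  have key := integral_mul_mul_log_le_of_monotoneOn_hazard ht₁.le ht (fun x _ => hF x)
    (fun x _ => hfpos x) (fun x _ => hG x) (fun x hx => hgpos x (ht₁.trans_le hx.1))
    (hinc.mono fun x hx => ⟨ht₁.trans_le hx.1, hx.2⟩)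
  have hscaled := div_le_div_of_nonneg_right key (sub_pos.2 hD.1).le
  rw [add_div] at hscaled
  simp only [wInacc, gcm, gfr₁, ← mul_div_assoc, div_mul_eq_mul_div, intervalIntegral.integral_div]
  rw [neg_mul, div_mul_eq_mul_div]
  linarith
end

section
/- For fixed t₁, if t₂ ↦ h₂^Y(t₁,t₂) is decreasing in t₂, then H^w_{X,Y}(t₁,t₂) ≤ −m_X(t₁,t₂) ln h₂^Y(t₁,t₂) − ∫_{t₁}^{t₂} [x f(x)/(F(t₂)−F(t₁))] ln[(G(x)−G(t₁))/(G(t₂)−G(t₁))] dx. -/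
/-!
Since `h₂^Y(t₁, ·)` is decreasing, `h₂^Y(t₁, t₂) ≤ g x / (G x - G t₁)` for `t₁ < x ≤ t₂`, i.e.
`log h₂^Y(t₁, t₂) + log ((G x - G t₁) / (G t₂ - G t₁)) ≤ log (g x / (G t₂ - G t₁))`;
multiply by the weight `x f x / (F t₂ - F t₁) ≥ 0` and integrate.

The work is integrability, as the logarithms blow up at `t₁`. Writing
`G x - G t₁ = (x - t₁) * dslope G t₁ x`, with `dslope G t₁` continuous and positive on `[t₁, t₂]`,
reduces the second integrand to `f x * log (x - t₁)`, integrable because `F x - F t₁ = O(x - t₁)`.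
The first integrand is squeezed between the others and a multiple of the weight, because the
monotonicity of `g / (G - G t₁)` keeps `g` bounded near `t₁`.
-/

open MeasureTheory Real

open Set

theorem continuous_dslope_of_hasDerivAt {F f : ℝ → ℝ} (hF : ∀ x, HasDerivAt F (f x) x) (a : ℝ) :
    Continuous (dslope F a) := by
  refine continuous_iff_continuousAt.2 fun x => ?_
  rcases eq_or_ne x a with rfl | hx
  · exact continuousAt_dslope_same.2 (hF x).differentiableAt
  · exact (continuousAt_dslope_of_ne hx).2 (hF x).continuousAt

theorem intervalIntegrable_deriv_of_hasDerivAt_of_nonneg {F f : ℝ → ℝ} {a b : ℝ}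
    (hF : ∀ x, HasDerivAt F (f x) x) (hf : ∀ x ∈ Ioo a b, 0 ≤ f x) (hab : a ≤ b) :
    IntervalIntegrable f volume a b :=
  intervalIntegral.intervalIntegrable_deriv_of_nonneg
    (continuous_iff_continuousAt.2 fun x => (hF x).continuousAt).continuousOn
    (fun x _ => hF x) (by simpa [hab] using hf)

theorem intervalIntegrable_mul_log_sub {F f : ℝ → ℝ} {a b : ℝ}
    (hF : ∀ x, HasDerivAt F (f x) x) (hf : ∀ x ∈ Ioo a b, 0 ≤ f x) (hab : a ≤ b) :
    IntervalIntegrable (fun x => f x * log (x - a)) volume a b := by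
  have hs := continuous_dslope_of_hasDerivAt hF a
  have hprim : Continuous fun x => ∫ y in a..x, dslope F a y :=
    continuous_iff_continuousAt.2 fun x => (hs.integral_hasStrictDerivAt a x).hasDerivAt.continuousAt
  -- `Φ` is an antiderivative of `f x * (log (b - a) - log (x - a)) ≥ 0`; writing
  -- `F x - F a = (x - a) * dslope F a x` shows that it is continuous at `a`.
  set Φ : ℝ → ℝ := fun x => (F x - F a) * (log (b - a) - log (x - a)) + ∫ y in a..x, dslope F a y
  have hΦ : Continuous Φ := by
    have : Φ = fun x => dslope F a x * ((x - a) * log (b - a) - (x - a) * log (x - a))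
        + ∫ y in a..x, dslope F a y := by
      funext x; simp only [Φ, ← sub_smul_dslope F a x, smul_eq_mul]; ring
    rw [this]
    have hlin : Continuous fun x : ℝ => x - a := continuous_id.sub continuous_const
    exact (hs.mul ((hlin.mul continuous_const).sub (continuous_mul_log.comp hlin))).add hprim
  have hΦ' : ∀ x ∈ Ioo a b, HasDerivAt Φ (f x * (log (b - a) - log (x - a))) x := by
    intro x hx
    have hxa : x - a ≠ 0 := sub_ne_zero.2 hx.1.ne'
    have := (((hF x).sub_const (F a)).mul
      ((((hasDerivAt_id x).sub_const a).log hxa).const_sub (log (b - a)))).add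
      (hs.integral_hasStrictDerivAt a x).hasDerivAt
    refine this.congr_deriv ?_
    simp only [id, dslope_of_ne _ hx.1.ne', slope_def_field]
    field_simp
    ring
  have hnonneg : ∀ x ∈ Ioo a b, 0 ≤ f x * (log (b - a) - log (x - a)) := fun x hx =>
    mul_nonneg (hf x hx) (sub_nonneg.2 (log_le_log (by linarith [hx.1]) (by linarith [hx.2])))
  have hint := intervalIntegral.intervalIntegrable_deriv_of_nonneg hΦ.continuousOn
    (by rwa [min_eq_left hab, max_eq_right hab]) (by rwa [min_eq_left hab, max_eq_right hab])
  have hfint := intervalIntegrable_deriv_of_hasDerivAt_of_nonneg hF hf hab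
  convert (hfint.mul_const (log (b - a))).sub hint using 1
  funext x; ring

theorem dslope_pos_of_hasDerivAt {G g : ℝ → ℝ} {a b : ℝ} (hG : ∀ x, HasDerivAt G (g x) x)
    (hg : ∀ x ∈ Icc a b, 0 < g x) : ∀ x ∈ Icc a b, 0 < dslope G a x := by
  intro x hx
  rcases hx.1.eq_or_lt with rfl | hax
  · rw [dslope_same, (hG _).deriv]
    exact hg _ hx
  · have hmono : StrictMonoOn G (Icc a b) := strictMonoOn_of_deriv_pos (convex_Icc a b)
      (continuous_iff_continuousAt.2 fun y => (hG y).continuousAt).continuousOn fun y hy => by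
        rw [interior_Icc] at hy
        rw [(hG y).deriv]
        exact hg y (Ioo_subset_Icc_self hy)
    rw [dslope_of_ne _ hax.ne', slope_def_field]
    exact div_pos (sub_pos.2 (hmono (left_mem_Icc.2 (hx.1.trans hx.2)) hx hax)) (sub_pos.2 hax)

theorem intervalIntegrable_mul_log_sub_div {F f G g : ℝ → ℝ} {a b c : ℝ}
    (hF : ∀ x, HasDerivAt F (f x) x) (hf : ∀ x ∈ Ioo a b, 0 ≤ f x)
    (hG : ∀ x, HasDerivAt G (g x) x) (hpos : ∀ x ∈ Icc a b, 0 < dslope G a x) (hc : c ≠ 0)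
    (hab : a ≤ b) :
    IntervalIntegrable (fun x => f x * log ((G x - G a) / c)) volume a b := by
  have hcont : ContinuousOn (fun x => log (dslope G a x / c)) (uIcc a b) := by
    rw [uIcc_of_le hab]
    exact ((continuous_dslope_of_hasDerivAt hG a).continuousOn.div_const c).log
      fun x hx => div_ne_zero (hpos x hx).ne' hc
  have hsum := ((intervalIntegrable_deriv_of_hasDerivAt_of_nonneg hF hf hab).mul_continuousOn
    hcont).add (intervalIntegrable_mul_log_sub hF hf hab)
  rw [intervalIntegrable_iff_integrableOn_Ioc_of_le hab] at hsum ⊢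
  refine hsum.congr_fun (fun x hx => ?_) measurableSet_Ioc
  simp only
  rw [← sub_smul_dslope G a x, smul_eq_mul, mul_div_assoc,
    log_mul (sub_ne_zero.2 hx.1.ne') (div_ne_zero (hpos x (Ioc_subset_Icc_self hx)).ne' hc)]
  ring

theorem exists_le_of_antitoneOn_div_sub {G g : ℝ → ℝ} {a b : ℝ}
    (hG : ∀ x, HasDerivAt G (g x) x) (hpos : ∀ x ∈ Icc a b, 0 < dslope G a x)
    (hdec : AntitoneOn (fun x => g x / (G x - G a)) (Ioi a)) :
    ∃ K, ∀ x ∈ Ioc a b, g x ≤ K := by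
  rcases lt_or_ge b a with hba | hab
  · exact ⟨0, fun x hx => absurd (hx.1.trans_le hx.2) hba.not_gt⟩
  have hs := (continuous_dslope_of_hasDerivAt hG a).continuousOn (s := Icc a b)
  obtain ⟨x₀, hx₀, hmin⟩ := isCompact_Icc.exists_isMinOn (nonempty_Icc.2 hab) hs
  obtain ⟨x₁, hx₁, hmax⟩ := isCompact_Icc.exists_isMaxOn (nonempty_Icc.2 hab) hs
  set c := dslope G a x₀
  set C := dslope G a x₁
  have hc : 0 < c := hpos x₀ hx₀
  have hC : 0 ≤ C := hc.le.trans (hmin hx₁)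
  refine ⟨4 * C ^ 2 / c, fun x hx => ?_⟩
  have hxa : 0 < x - a := sub_pos.2 hx.1
  -- Mean value theorem on the right half `[y, x]` of `[a, x]`: away from `a` the increment of
  -- `G` is comparable to `x - a` from both sides, and `g x / (G x - G a) ≤ g ξ / (G ξ - G a)`.
  set y := (a + x) / 2 with hy
  obtain ⟨ξ, hξ, hgξ⟩ := exists_hasDerivAt_eq_slope G g (show y < x by linarith)
    (continuous_iff_continuousAt.2 fun z => (hG z).continuousAt).continuousOn fun z _ => hG z
  have hIcc : ∀ z, a < z → z ≤ x → z ∈ Icc a b := fun z hz hzx => ⟨hz.le, hzx.trans hx.2⟩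
  have hincr : ∀ z ∈ Icc a b, G z - G a = (z - a) * dslope G a z := fun z _ =>
    (sub_smul_dslope G a z).symm
  have hay : a < y := by linarith
  have hyx : y < x := by linarith
  have hξa : a < ξ := hay.trans hξ.1
  have hux : G x - G a ≤ C * (x - a) := by
    rw [hincr x (hIcc x hx.1 le_rfl), mul_comm C]
    exact mul_le_mul_of_nonneg_left (show dslope G a x ≤ C from hmax (hIcc x hx.1 le_rfl)) hxa.le
  have huξ : c * (x - a) / 2 ≤ G ξ - G a := by
    rw [hincr ξ (hIcc ξ hξa hξ.2.le)]
    have hcξ : c ≤ dslope G a ξ := hmin (hIcc ξ hξa hξ.2.le)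
    have : c * (x - a) / 2 ≤ c * (ξ - a) := by nlinarith [hξ.1]
    nlinarith
  have huy : 0 ≤ G y - G a := by
    rw [hincr y (hIcc y hay hyx.le)]
    exact mul_nonneg (sub_nonneg.2 hay.le) (hpos y (hIcc y hay hyx.le)).le
  have hgξC : g ξ ≤ 2 * C := by
    rw [hgξ, div_le_iff₀ (sub_pos.2 hyx), show 2 * C * (x - y) = C * (x - a) by rw [hy]; ring]
    linarith
  have hdiv := hdec (mem_Ioi.2 hξa) (mem_Ioi.2 hx.1) hξ.2.le
  have hux0 : 0 < G x - G a := by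
    rw [hincr x (hIcc x hx.1 le_rfl)]; exact mul_pos hxa (hpos x (hIcc x hx.1 le_rfl))
  calc g x = g x / (G x - G a) * (G x - G a) := by field_simp
    _ ≤ g ξ / (G ξ - G a) * (G x - G a) := mul_le_mul_of_nonneg_right hdiv hux0.le
    _ ≤ 2 * C / (c * (x - a) / 2) * (C * (x - a)) :=
        mul_le_mul (div_le_div₀ (by positivity) hgξC (by positivity) huξ) hux hux0.le
          (by positivity)
    _ = 4 * C ^ 2 / c := by field_simp; ring

theorem integral_mul_const_add_le_of_le {w p r : ℝ → ℝ} {a b ℓ M : ℝ} (hab : a ≤ b)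
    (hw : ∀ x ∈ Ioc a b, 0 ≤ w x) (hpr : ∀ x ∈ Ioc a b, ℓ + p x ≤ r x)
    (hrM : ∀ x ∈ Ioc a b, r x ≤ M) (hwi : IntervalIntegrable w volume a b)
    (hwp : IntervalIntegrable (fun x => w x * p x) volume a b)
    (hwr : AEStronglyMeasurable (fun x => w x * r x) (volume.restrict (Ioc a b))) :
    (∫ x in a..b, w x) * ℓ + ∫ x in a..b, w x * p x ≤ ∫ x in a..b, w x * r x := by
  have hlow := (hwi.mul_const ℓ).add hwp
  have hle : ∀ x ∈ Ioc a b, w x * ℓ + w x * p x ≤ w x * r x := fun x hx => by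
    rw [← mul_add]; exact mul_le_mul_of_nonneg_left (hpr x hx) (hw x hx)
  have hwr' : IntervalIntegrable (fun x => w x * r x) volume a b := by
    rw [intervalIntegrable_iff_integrableOn_Ioc_of_le hab] at hlow hwi ⊢
    exact integrable_of_le_of_le hwr ((ae_restrict_mem measurableSet_Ioc).mono hle)
      ((ae_restrict_mem measurableSet_Ioc).mono fun x hx =>
        mul_le_mul_of_nonneg_left (hrM x hx) (hw x hx)) hlow (hwi.mul_const M)
  rw [← intervalIntegral.integral_mul_const, ← intervalIntegral.integral_add (hwi.mul_const ℓ) hwp]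
  exact intervalIntegral.integral_mono_on_of_le_Ioo hab hlow hwr' fun x hx =>
    hle x (Ioo_subset_Ioc_self hx)

theorem log_add_log_div_le {ℓ u v c : ℝ} (hℓ : 0 < ℓ) (hu : 0 < u) (hc : 0 < c)
    (h : ℓ ≤ v / u) : log ℓ + log (u / c) ≤ log (v / c) := by
  rw [← log_mul hℓ.ne' (div_pos hu hc).ne', ← mul_div_assoc]
  exact log_le_log (by positivity) (div_le_div_of_nonneg_right ((le_div_iff₀ hu).1 h) hc.le)

theorem measurable_of_hasDerivAt {F f : ℝ → ℝ} (hF : ∀ x, HasDerivAt F (f x) x) :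
    Measurable f := by
  simpa only [funext fun x => (hF x).deriv] using measurable_deriv F

theorem stmt9 (f F g G : ℝ → ℝ) (t₁ t₂ : ℝ)
    (ht₁ : 0 < t₁) (ht : t₁ < t₂)
    (hD : F t₁ < F t₂ ∧ G t₁ < G t₂)              -- (t₁,t₂) ∈ D
    (hF : ∀ x, HasDerivAt F (f x) x) (hG : ∀ x, HasDerivAt G (g x) x)
    (hfpos : ∀ x, 0 ≤ f x) (hgpos : ∀ x, 0 < x → 0 < g x)
    -- for fixed t₁, h₂^Y(t₁,·) is decreasing in t₂ on (t₁,∞)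
    (hdec : AntitoneOn (fun s => gfr₂ g G t₁ s) (Set.Ioi t₁)) :
    wInacc f F g G t₁ t₂ ≤
      -gcm f F t₁ t₂ * Real.log (gfr₂ g G t₁ t₂)
        - ∫ x in t₁..t₂, x * f x / (F t₂ - F t₁)
            * Real.log ((G x - G t₁) / (G t₂ - G t₁)) := by
  obtain ⟨hFlt, hGlt⟩ := hD
  have hΔG : 0 < G t₂ - G t₁ := sub_pos.2 hGlt
  have hg : ∀ x ∈ Ioc t₁ t₂, 0 < g x := fun x hx => hgpos x (ht₁.trans hx.1)
  have hslope := dslope_pos_of_hasDerivAt (b := t₂) hG fun x hx => hgpos x (ht₁.trans_le hx.1)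
  have hu : ∀ x ∈ Ioc t₁ t₂, 0 < G x - G t₁ := fun x hx => by
    rw [← sub_smul_dslope, smul_eq_mul]
    exact mul_pos (sub_pos.2 hx.1) (hslope x (Ioc_subset_Icc_self hx))
  obtain ⟨K, hK⟩ := exists_le_of_antitoneOn_div_sub hG hslope hdec
  have hf := intervalIntegrable_deriv_of_hasDerivAt_of_nonneg hF (fun x _ => hfpos x) ht.le
  have hfG := intervalIntegrable_mul_log_sub_div hF (fun x _ => hfpos x) hG hslope hΔG.ne' ht.le
  have key := integral_mul_const_add_le_of_le (w := fun x => x * f x / (F t₂ - F t₁)) ht.le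
    (fun x hx => div_nonneg (mul_nonneg (ht₁.trans hx.1).le (hfpos x)) (sub_pos.2 hFlt).le)
    (fun x hx => log_add_log_div_le (div_pos (hg t₂ ⟨ht, le_rfl⟩) hΔG) (hu x hx) hΔG
      (hdec hx.1 ht hx.2))
    (fun x hx => log_le_log (div_pos (hg x hx) hΔG) (div_le_div_of_nonneg_right (hK x hx) hΔG.le))
    ((hf.continuousOn_mul continuousOn_id).div_const _)
    (by
      convert hfG.continuousOn_mul (continuousOn_id.div_const (F t₂ - F t₁)) using 1
      funext x; simp only [id]; ring)
    (by
      have := measurable_of_hasDerivAt hF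
      have := measurable_of_hasDerivAt hG
      fun_prop)
  rw [intervalIntegral.integral_div] at key
  simp only [wInacc, gcm, gfr₂, ← mul_div_assoc]
  linarith
end

section
/- Let X be uniform on [α,β] and Y follow Pareto-I with G(t) = 1 − α/t, t > α > 0. Then for α < t₁ < t₂ < β: H^w_{X,Y}(t₁,t₂) + m_X(t₁,t₂) ln h₁^Y(t₁,t₂) = 2[(1/(t₂−t₁))∫_{t₁}^{t₂} x ln x dx − ((t₁+t₂)/2) ln t₁] ≥ 0. -/
open MeasureTheory Real

/-!
On `[t₁, t₂]` the uniform law conditions to the constant density `1 / (t₂ - t₁)`,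
so `m_X = (t₁ + t₂) / 2`, and the Pareto density `α / x²` conditions to
`h₁ · (t₁ / x)²`.  Taking logarithms, the `log h₁` part of `H^w` is exactly `-m_X log h₁`,
leaving `2 / (t₂ - t₁) ∫ x log x - 2 m_X log t₁`, which is nonnegative because `log` is
increasing.
-/

open Set

section IntervalWeights

variable {f F g G : ℝ → ℝ} {t₁ t₂ : ℝ}

lemma gcm_eq_midpoint (ht : t₁ < t₂)
    (hf : ∀ x ∈ Icc t₁ t₂, f x / (F t₂ - F t₁) = (t₂ - t₁)⁻¹) :
    gcm f F t₁ t₂ = (t₁ + t₂) / 2 := by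
  have hcongr : EqOn (fun x => x * f x / (F t₂ - F t₁)) (fun x => (t₂ - t₁)⁻¹ * x)
      (uIcc t₁ t₂) := by
    intro x hx
    rw [uIcc_of_le ht.le] at hx
    simp only [mul_div_assoc, hf x hx, mul_comm]
  rw [gcm, ← intervalIntegral.integral_div, intervalIntegral.integral_congr hcongr,
    intervalIntegral.integral_const_mul, integral_id]
  field_simp [(sub_pos.2 ht).ne']
  ring

lemma wInacc_eq_of_log_ratio (ht : t₁ < t₂) (L : ℝ)
    (hf : ∀ x ∈ Icc t₁ t₂, f x / (F t₂ - F t₁) = (t₂ - t₁)⁻¹)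
    (hg : ∀ x ∈ Icc t₁ t₂, Real.log (g x / (G t₂ - G t₁)) = L - 2 * Real.log x) :
    wInacc f F g G t₁ t₂
      = 2 * ((t₂ - t₁)⁻¹ * ∫ x in t₁..t₂, x * Real.log x) - (t₁ + t₂) / 2 * L := by
  have hcongr : EqOn
      (fun x => x * (f x / (F t₂ - F t₁)) * Real.log (g x / (G t₂ - G t₁)))
      (fun x => (t₂ - t₁)⁻¹ * (L * x - 2 * (x * Real.log x))) (uIcc t₁ t₂) := by
    intro x hx
    rw [uIcc_of_le ht.le] at hx
    simp only [hf x hx, hg x hx]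
    ring
  have hint : IntervalIntegrable (fun x => x * Real.log x) volume t₁ t₂ :=
    Real.continuous_mul_log.intervalIntegrable _ _
  rw [wInacc, intervalIntegral.integral_congr hcongr, intervalIntegral.integral_const_mul,
    intervalIntegral.integral_sub (intervalIntegral.intervalIntegrable_id.const_mul L)
      (hint.const_mul 2),
    intervalIntegral.integral_const_mul, intervalIntegral.integral_const_mul, integral_id]
  field_simp [(sub_pos.2 ht).ne']
  ring

lemma wInacc_add_gcm_mul_log_gfr₁ (ht₁ : 0 < t₁) (ht : t₁ < t₂)
    (hf : ∀ x ∈ Icc t₁ t₂, f x / (F t₂ - F t₁) = (t₂ - t₁)⁻¹)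
    (hg : ∀ x ∈ Icc t₁ t₂, g x = g t₁ * (t₁ / x) ^ 2)
    (hh : gfr₁ g G t₁ t₂ ≠ 0) :
    wInacc f F g G t₁ t₂ + gcm f F t₁ t₂ * Real.log (gfr₁ g G t₁ t₂)
      = 2 * ((1 / (t₂ - t₁)) * (∫ x in t₁..t₂, x * Real.log x)
          - ((t₁ + t₂) / 2) * Real.log t₁) := by
  have hlog : ∀ x ∈ Icc t₁ t₂, Real.log (g x / (G t₂ - G t₁))
      = (Real.log (gfr₁ g G t₁ t₂) + 2 * Real.log t₁) - 2 * Real.log x := by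
    intro x hx
    have hx₀ : x ≠ 0 := (ht₁.trans_le hx.1).ne'
    rw [hg x hx, mul_div_right_comm, ← gfr₁, Real.log_mul hh (by positivity), Real.log_pow,
      Real.log_div ht₁.ne' hx₀]
    push_cast
    ring
  rw [wInacc_eq_of_log_ratio ht _ hf hlog, gcm_eq_midpoint ht hf, one_div]
  ring

lemma midpoint_mul_log_le_average_mul_log (ht₁ : 0 < t₁) (ht : t₁ < t₂) :
    (t₁ + t₂) / 2 * Real.log t₁ ≤ 1 / (t₂ - t₁) * ∫ x in t₁..t₂, x * Real.log x := by
  have hmono : ∫ x in t₁..t₂, x * Real.log t₁ ≤ ∫ x in t₁..t₂, x * Real.log x :=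
    intervalIntegral.integral_mono_on ht.le
      ((continuous_id.mul continuous_const).intervalIntegrable _ _)
      (Real.continuous_mul_log.intervalIntegrable _ _) fun x hx =>
        mul_le_mul_of_nonneg_left (Real.log_le_log ht₁ hx.1) (ht₁.le.trans hx.1)
  rw [intervalIntegral.integral_mul_const, integral_id] at hmono
  rw [one_div_mul_eq_div, le_div_iff₀ (sub_pos.2 ht)]
  nlinarith

end IntervalWeights

section UniformPareto

variable {α β t₁ t₂ : ℝ}

lemma uniform_density_div_cdf_sub {f F : ℝ → ℝ}
    (hf : f = fun x => if α < x ∧ x < β then 1 / (β - α) else 0)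
    (hF : F = fun x => if x < α then 0 else if x < β then (x - α) / (β - α) else 1)
    (ht₁ : α < t₁) (ht : t₁ < t₂) (ht₂ : t₂ < β) :
    ∀ x ∈ Icc t₁ t₂, f x / (F t₂ - F t₁) = (t₂ - t₁)⁻¹ := by
  intro x hx
  subst hf hF
  have hβα : β - α ≠ 0 := by linarith
  simp only [if_pos (⟨ht₁.trans_le hx.1, hx.2.trans_lt ht₂⟩ : α < x ∧ x < β),
    if_neg (ht₁.trans ht).not_gt, if_neg ht₁.not_gt, if_pos ht₂, if_pos (ht.trans ht₂)]
  field_simp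
  ring

lemma pareto_density_eq {g : ℝ → ℝ} (hg : g = fun x => if α < x then α / x ^ 2 else 0)
    (hα : 0 ≤ α) (ht₁ : α < t₁) : ∀ x ∈ Icc t₁ t₂, g x = g t₁ * (t₁ / x) ^ 2 := by
  intro x hx
  have ht₁₀ : t₁ ≠ 0 := (hα.trans_lt ht₁).ne'
  have hx₀ : x ≠ 0 := (hα.trans_lt (ht₁.trans_le hx.1)).ne'
  subst hg
  simp only [if_pos ht₁, if_pos (ht₁.trans_le hx.1)]
  field_simp

lemma pareto_gfr₁ {g G : ℝ → ℝ}
    (hg : g = fun x => if α < x then α / x ^ 2 else 0)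
    (hG : G = fun x => if α < x then 1 - α / x else 0) (hα : 0 < α) (ht₁ : α < t₁)
    (ht : t₁ < t₂) : gfr₁ g G t₁ t₂ = t₂ / (t₁ * (t₂ - t₁)) := by
  subst hg hG
  have ht₁₀ : 0 < t₁ := hα.trans ht₁
  have ht₂₀ : 0 < t₂ := ht₁₀.trans ht
  simp only [gfr₁, if_pos ht₁, if_pos (ht₁.trans ht)]
  rw [show 1 - α / t₂ - (1 - α / t₁) = α * (t₂ - t₁) / (t₁ * t₂) by field_simp; ring]
  field_simp

end UniformPareto

theorem stmt11_general (α β t₁ t₂ : ℝ) (hα : 0 < α)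
    (ht₁ : α < t₁) (ht : t₁ < t₂) (ht₂ : t₂ < β)
    -- X uniform on [α,β]
    (f F : ℝ → ℝ) (hf : f = fun x => if α < x ∧ x < β then 1 / (β - α) else 0)
    (hF : F = fun x => if x < α then 0 else if x < β then (x - α) / (β - α) else 1)
    -- Y Pareto-I: G(t) = 1 - α/t for t > α
    (g G : ℝ → ℝ) (hg : g = fun x => if α < x then α / x ^ 2 else 0)
    (hG : G = fun x => if α < x then 1 - α / x else 0) :
    wInacc f F g G t₁ t₂ + gcm f F t₁ t₂ * Real.log (gfr₁ g G t₁ t₂)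
      = 2 * ((1 / (t₂ - t₁)) * (∫ x in t₁..t₂, x * Real.log x)
          - ((t₁ + t₂) / 2) * Real.log t₁) ∧
    0 ≤ wInacc f F g G t₁ t₂ + gcm f F t₁ t₂ * Real.log (gfr₁ g G t₁ t₂) := by
  have ht₁₀ : 0 < t₁ := hα.trans ht₁
  have hh : gfr₁ g G t₁ t₂ ≠ 0 := by
    rw [pareto_gfr₁ hg hG hα ht₁ ht]
    exact (div_pos (ht₁₀.trans ht) (mul_pos ht₁₀ (sub_pos.2 ht))).ne'
  have key := wInacc_add_gcm_mul_log_gfr₁ ht₁₀ ht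
    (uniform_density_div_cdf_sub hf hF ht₁ ht ht₂) (pareto_density_eq hg hα.le ht₁) hh
  refine ⟨key, ?_⟩
  rw [key]
  linarith [midpoint_mul_log_le_average_mul_log ht₁₀ ht]

theorem stmt11 (α β t₁ t₂ : ℝ) (hα : 0 < α) (hαβ : α < β)
    (ht₁ : α < t₁) (ht : t₁ < t₂) (ht₂ : t₂ < β)
    -- X uniform on [α,β]
    (f F : ℝ → ℝ) (hf : f = fun x => if α < x ∧ x < β then 1 / (β - α) else 0)
    (hF : F = fun x => if x < α then 0 else if x < β then (x - α) / (β - α) else 1)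
    -- Y Pareto-I: G(t) = 1 - α/t for t > α
    (g G : ℝ → ℝ) (hg : g = fun x => if α < x then α / x ^ 2 else 0)
    (hG : G = fun x => if α < x then 1 - α / x else 0) :
    wInacc f F g G t₁ t₂ + gcm f F t₁ t₂ * Real.log (gfr₁ g G t₁ t₂)
      = 2 * ((1 / (t₂ - t₁)) * (∫ x in t₁..t₂, x * Real.log x)
          - ((t₁ + t₂) / 2) * Real.log t₁) ∧
    0 ≤ wInacc f F g G t₁ t₂ + gcm f F t₁ t₂ * Real.log (gfr₁ g G t₁ t₂) :=
  stmt11_general α β t₁ t₂ hα ht₁ ht ht₂ f F hf hF g G hg hG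
end

section
/- Let X be uniform on (α,β) and let Y satisfy the proportional reversed hazard rate model G(t) = [F(t)]^θ with θ > 0, where F is the distribution of X. Then for all α < t₁ < t₂ < β: H^w_{X,Y}(t₁,t₂) + m_X(t₁,t₂) ln h₁^Y(t₁,t₂) = (1−θ)[E(X ln(X−α) | t₁ < X < t₂) − m_X(t₁,t₂) ln(t₁−α)]. -/
open MeasureTheory Real

theorem stmt15 (α β θ t₁ t₂ : ℝ) (hθ : 0 < θ) (hαβ : α < β)
    (ht₁ : α < t₁) (ht : t₁ < t₂) (ht₂ : t₂ < β)
    -- X uniform on (α,β)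
    (f F : ℝ → ℝ) (hf : f = fun x => 1 / (β - α))
    (hF : F = fun x => (x - α) / (β - α))
    -- Y follows the PRHR model: G = F^θ, with density g
    (g G : ℝ → ℝ) (hG : G = fun x => (F x) ^ θ)
    (hg : g = fun x => θ * (F x) ^ (θ - 1) * f x) :
    wInacc f F g G t₁ t₂ + gcm f F t₁ t₂ * Real.log (gfr₁ g G t₁ t₂)
      = (1 - θ) *
          ((∫ x in t₁..t₂, x * Real.log (x - α) * f x) / (F t₂ - F t₁)
            - gcm f F t₁ t₂ * Real.log (t₁ - α)) := by
  subst hg hG hf hF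
  simp only [wInacc, gcm, gfr₁]
  have hb : (0:ℝ) < β - α := by linarith
  have h1 : (0:ℝ) < t₁ - α := by linarith
  set b : ℝ := β - α with hbdef
  have hΔG : (0:ℝ) < ((t₂ - α)/b)^θ - ((t₁ - α)/b)^θ := by
    have hlt : (t₁ - α)/b < (t₂ - α)/b := by gcongr
    have := Real.rpow_lt_rpow (le_of_lt (div_pos h1 hb)) hlt hθ
    linarith
  set ΔG : ℝ := ((t₂ - α)/b)^θ - ((t₁ - α)/b)^θ with hΔGdef
  set A : ℝ := Real.log θ - θ * Real.log b - Real.log ΔG with hA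
  have key : ∀ x : ℝ, t₁ ≤ x →
      Real.log (θ * ((x - α)/b)^(θ-1) * (1/b) / ΔG)
        = A + (θ-1) * Real.log (x - α) := by
    intro x hx
    have hxα : (0:ℝ) < x - α := by linarith
    have hr : (0:ℝ) < (x - α)/b := div_pos hxα hb
    rw [Real.log_div (by positivity) (ne_of_gt hΔG),
        Real.log_mul (by positivity) (by positivity),
        Real.log_mul (ne_of_gt hθ) (by positivity),
        Real.log_rpow hr, Real.log_div (ne_of_gt hxα) (ne_of_gt hb),
        one_div, Real.log_inv, hA]
    ring
  set ΔF : ℝ := (t₂ - α)/b - (t₁ - α)/b with hΔF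
  set c : ℝ := 1/b / ΔF with hc
  have hcong : (∫ x in t₁..t₂, x * (1/b / ΔF) *
        Real.log (θ * ((x - α)/b)^(θ-1) * (1/b) / ΔG))
      = ∫ x in t₁..t₂, (c * A * x + c * (θ-1) * (x * Real.log (x - α))) := by
    apply intervalIntegral.integral_congr
    intro x hx
    rw [Set.uIcc_of_le (le_of_lt ht)] at hx
    dsimp only
    rw [key x hx.1]
    ring
  have hInt1 : IntervalIntegrable (fun x : ℝ => c * A * x) volume t₁ t₂ :=
    (continuous_const.mul continuous_id).intervalIntegrable t₁ t₂
  have hlogCont : ContinuousOn (fun x : ℝ => x * Real.log (x - α)) (Set.uIcc t₁ t₂) := by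
    apply continuousOn_id.mul
    apply ContinuousOn.log
    · exact (continuous_id.sub continuous_const).continuousOn
    · intro x hx
      rw [Set.uIcc_of_le (le_of_lt ht)] at hx
      have : (0:ℝ) < x - α := by linarith [hx.1]
      exact ne_of_gt this
  have hInt2 : IntervalIntegrable (fun x : ℝ => c * (θ-1) * (x * Real.log (x - α)))
      volume t₁ t₂ :=
    (continuousOn_const.mul hlogCont).intervalIntegrable
  have hsplit : (∫ x in t₁..t₂, (c * A * x + c * (θ-1) * (x * Real.log (x - α))))
      = c * A * (∫ x in t₁..t₂, x)
        + c * (θ-1) * (∫ x in t₁..t₂, x * Real.log (x - α)) := by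
    rw [intervalIntegral.integral_add hInt1 hInt2,
        intervalIntegral.integral_const_mul, intervalIntegral.integral_const_mul]
  rw [hcong, hsplit, key t₁ le_rfl]
  have e1 : (∫ x in t₁..t₂, x * (1/b)) = (∫ x in t₁..t₂, x) * (1/b) :=
    intervalIntegral.integral_mul_const _ _
  have e2 : (∫ x in t₁..t₂, x * Real.log (x - α) * (1/b))
      = (∫ x in t₁..t₂, x * Real.log (x - α)) * (1/b) :=
    intervalIntegral.integral_mul_const _ _
  rw [e1, e2, hc]
  ring
end

section
/- Let X follow the power distribution F(t) = (t/b)^c on (0,b) with b,c > 0, and Y satisfy the PRHR model G(t) = [F(t)]^θ, θ > 0. Then for 0 < t₁ < t₂ < b: H^w_{X,Y}(t₁,t₂) + m_X(t₁,t₂) ln h₁^Y(t₁,t₂) = (1−cθ)[E(X ln X | t₁ < X < t₂) − m_X(t₁,t₂) ln t₁]. -/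
open MeasureTheory Real

theorem stmt16 (b c θ t₁ t₂ : ℝ) (hb : 0 < b) (hc : 0 < c) (hθ : 0 < θ)
    (ht₁ : 0 < t₁) (ht : t₁ < t₂) (ht₂ : t₂ < b)
    -- X follows the power distribution F(t) = (t/b)^c on (0,b)
    (f F : ℝ → ℝ) (hF : F = fun x => (x / b) ^ c)
    (hf : f = fun x => c * x ^ (c - 1) / b ^ c)
    -- Y follows the PRHR model: G = F^θ
    (g G : ℝ → ℝ) (hG : G = fun x => (x / b) ^ (c * θ))
    (hg : g = fun x => c * θ * x ^ (c * θ - 1) / b ^ (c * θ)) :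
    wInacc f F g G t₁ t₂ + gcm f F t₁ t₂ * Real.log (gfr₁ g G t₁ t₂)
      = (1 - c * θ) *
          ((∫ x in t₁..t₂, x * Real.log x * f x) / (F t₂ - F t₁)
            - gcm f F t₁ t₂ * Real.log t₁) := by
  subst hF hf hG hg
  have ht₂0 : 0 < t₂ := ht₁.trans ht
  have hcθ : 0 < c * θ := mul_pos hc hθ
  have hΔF : (0:ℝ) < (t₂ / b) ^ c - (t₁ / b) ^ c :=
    sub_pos.mpr (Real.rpow_lt_rpow (by positivity) (by gcongr) hc)
  have hΔG : (0:ℝ) < (t₂ / b) ^ (c * θ) - (t₁ / b) ^ (c * θ) :=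
    sub_pos.mpr (Real.rpow_lt_rpow (by positivity) (by gcongr) hcθ)
  have hpos : ∀ x ∈ Set.uIcc t₁ t₂, 0 < x := by
    intro x hx
    rw [Set.uIcc_of_le ht.le] at hx
    exact lt_of_lt_of_le ht₁ hx.1
  have aux : ∀ x : ℝ, 0 < x →
      Real.log (c * θ * x ^ (c * θ - 1) / b ^ (c * θ) /
        ((t₂ / b) ^ (c * θ) - (t₁ / b) ^ (c * θ)))
      = Real.log (c * θ) + (c * θ - 1) * Real.log x - (c * θ) * Real.log b
          - Real.log ((t₂ / b) ^ (c * θ) - (t₁ / b) ^ (c * θ)) := by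
    intro x hx
    rw [Real.log_div (by positivity) (ne_of_gt hΔG),
      Real.log_div (by positivity) (by positivity),
      Real.log_mul (by positivity) (by positivity),
      Real.log_rpow hx, Real.log_rpow hb]
  have hcont1 : ContinuousOn (fun x : ℝ => x * (c * x ^ (c - 1) / b ^ c))
      (Set.uIcc t₁ t₂) := by
    exact continuousOn_id.mul ((continuousOn_const.mul
      (ContinuousOn.rpow_const continuousOn_id
        (fun x hx => Or.inl (ne_of_gt (hpos x hx))))).div_const _)
  have hcont2 : ContinuousOn
      (fun x : ℝ => x * Real.log x * (c * x ^ (c - 1) / b ^ c))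
      (Set.uIcc t₁ t₂) := by
    exact (continuousOn_id.mul (Real.continuousOn_log.mono
        (fun x hx => ne_of_gt (hpos x hx)))).mul ((continuousOn_const.mul
      (ContinuousOn.rpow_const continuousOn_id
        (fun x hx => Or.inl (ne_of_gt (hpos x hx))))).div_const _)
  have hA : IntervalIntegrable (fun x : ℝ => x * (c * x ^ (c - 1) / b ^ c))
      volume t₁ t₂ := hcont1.intervalIntegrable
  have hB : IntervalIntegrable
      (fun x : ℝ => x * Real.log x * (c * x ^ (c - 1) / b ^ c))
      volume t₁ t₂ := hcont2.intervalIntegrable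
  simp only [wInacc, gcm, gfr₁]
  set ΔF := (t₂ / b) ^ c - (t₁ / b) ^ c with hΔFdef
  set ΔG := (t₂ / b) ^ (c * θ) - (t₁ / b) ^ (c * θ) with hΔGdef
  set L := Real.log (c * θ * t₁ ^ (c * θ - 1) / b ^ (c * θ) / ΔG) with hL
  have hkey : (∫ x in t₁..t₂, x * ((c * x ^ (c - 1) / b ^ c) / ΔF) *
        Real.log ((c * θ * x ^ (c * θ - 1) / b ^ (c * θ)) / ΔG))
      = ((L - (c * θ - 1) * Real.log t₁) / ΔF) *
          (∫ x in t₁..t₂, x * (c * x ^ (c - 1) / b ^ c))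
        + ((c * θ - 1) / ΔF) *
          (∫ x in t₁..t₂, x * Real.log x * (c * x ^ (c - 1) / b ^ c)) := by
    rw [← intervalIntegral.integral_const_mul, ← intervalIntegral.integral_const_mul,
      ← intervalIntegral.integral_add (hA.const_mul _) (hB.const_mul _)]
    apply intervalIntegral.integral_congr
    intro x hx
    have hx0 := hpos x hx
    simp only
    rw [aux x hx0, hL, aux t₁ ht₁]
    ring
  rw [hkey]
  ring
end

section
/- Let X follow a Weibull distribution with survival function 1−F(t) = e^{−λ t^p} (t > 0, λ, p > 0) and Y satisfy the proportional hazard rate model 1−G(t) = [1−F(t)]^θ, θ > 0. Then for 0 < t₁ < t₂: H^w_{X,Y}(t₁,t₂) + m_X(t₁,t₂) ln h₁^Y(t₁,t₂) = (1−p)[E(X ln X | t₁ < X < t₂) − m_X(t₁,t₂) ln t₁] + λθ[E(X^{p+1} | t₁ < X < t₂) − t₁^p m_X(t₁,t₂)]. -/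
open MeasureTheory Real

theorem stmt17 (lam p θ t₁ t₂ : ℝ) (hlam : 0 < lam) (hp : 0 < p) (hθ : 0 < θ)
    (ht₁ : 0 < t₁) (ht : t₁ < t₂)
    -- X Weibull: survival 1 - F(t) = exp(-λ t^p)
    (f F : ℝ → ℝ) (hF : F = fun x => 1 - Real.exp (-(lam * x ^ p)))
    (hf : f = fun x => lam * p * x ^ (p - 1) * Real.exp (-(lam * x ^ p)))
    -- Y follows the PHR model: 1 - G = (1 - F)^θ
    (g G : ℝ → ℝ) (hG : G = fun x => 1 - Real.exp (-(lam * θ * x ^ p)))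
    (hg : g = fun x => lam * θ * p * x ^ (p - 1) * Real.exp (-(lam * θ * x ^ p))) :
    wInacc f F g G t₁ t₂ + gcm f F t₁ t₂ * Real.log (gfr₁ g G t₁ t₂)
      = (1 - p) *
          ((∫ x in t₁..t₂, x * Real.log x * f x) / (F t₂ - F t₁)
            - gcm f F t₁ t₂ * Real.log t₁)
        + lam * θ *
          ((∫ x in t₁..t₂, x ^ (p + 1) * f x) / (F t₂ - F t₁)
            - t₁ ^ p * gcm f F t₁ t₂) := by
  have ht₂ : 0 < t₂ := ht₁.trans ht
  have hrp : t₁ ^ p < t₂ ^ p := Real.rpow_lt_rpow ht₁.le ht hp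
  have hΔG : 0 < G t₂ - G t₁ := by
    rw [hG]
    simp only
    have h2 : Real.exp (-(lam * θ * t₂ ^ p)) < Real.exp (-(lam * θ * t₁ ^ p)) := by
      apply Real.exp_lt_exp.2
      nlinarith [mul_pos hlam hθ]
    linarith
  have hgpos : ∀ x : ℝ, 0 < x → 0 < g x := by
    intro x hx
    rw [hg]
    have h1 : 0 < x ^ (p - 1) := Real.rpow_pos_of_pos hx _
    positivity
  have hlogg : ∀ y : ℝ, 0 < y → Real.log (g y / (G t₂ - G t₁))
      = Real.log (lam * θ * p) + (p - 1) * Real.log y - lam * θ * y ^ p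
        - Real.log (G t₂ - G t₁) := by
    intro y hy
    have hyp : (0:ℝ) < y ^ (p - 1) := Real.rpow_pos_of_pos hy _
    rw [Real.log_div (ne_of_gt (hgpos y hy)) (ne_of_gt hΔG), hg]
    simp only
    rw [Real.log_mul (by positivity) (Real.exp_ne_zero _), Real.log_exp,
        Real.log_mul (by positivity) (ne_of_gt hyp), Real.log_rpow hy]
    ring
  have hlog : ∀ x : ℝ, 0 < x →
      Real.log (g x / (G t₂ - G t₁)) =
        Real.log (gfr₁ g G t₁ t₂) + (p - 1) * (Real.log x - Real.log t₁)
          - lam * θ * (x ^ p - t₁ ^ p) := by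
    intro x hx
    rw [gfr₁, hlogg x hx, hlogg t₁ ht₁]
    ring
  have hmem : ∀ x ∈ Set.uIcc t₁ t₂, 0 < x := by
    intro x hx
    rw [Set.uIcc_of_le ht.le] at hx
    exact lt_of_lt_of_le ht₁ hx.1
  have hcont_rpow : ∀ q : ℝ, ContinuousOn (fun x : ℝ => x ^ q) (Set.uIcc t₁ t₂) := by
    intro q x hx
    exact (Real.continuousAt_rpow_const x q (Or.inl (ne_of_gt (hmem x hx)))).continuousWithinAt
  have hcf : ContinuousOn f (Set.uIcc t₁ t₂) := by
    rw [hf]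
    exact (continuousOn_const.mul (hcont_rpow (p - 1))).mul
      (Real.continuous_exp.comp_continuousOn ((continuousOn_const.mul (hcont_rpow p)).neg))
  have hI1 : IntervalIntegrable (fun x => x * f x) volume t₁ t₂ :=
    (continuous_id.continuousOn.mul hcf).intervalIntegrable
  have hI2 : IntervalIntegrable (fun x => x * Real.log x * f x) volume t₁ t₂ :=
    (((continuous_id.continuousOn.mul
      (Real.continuousOn_log.mono (fun x hx => ne_of_gt (hmem x hx))))).mul
        hcf).intervalIntegrable
  have hI3 : IntervalIntegrable (fun x => x ^ (p + 1) * f x) volume t₁ t₂ :=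
    ((hcont_rpow (p + 1)).mul hcf).intervalIntegrable
  set a : ℝ := Real.log (gfr₁ g G t₁ t₂) - (p - 1) * Real.log t₁ + lam * θ * t₁ ^ p with ha
  have hJcongr : Set.EqOn (fun x => x * f x * Real.log (g x / (G t₂ - G t₁)))
      (fun x => a * (x * f x) + (p - 1) * (x * Real.log x * f x)
        - lam * θ * (x ^ (p + 1) * f x)) (Set.uIcc t₁ t₂) := by
    intro x hx
    have hx0 := hmem x hx
    simp only
    rw [hlog x hx0]
    have hxp : x ^ (p + 1) = x ^ p * x := by
      rw [Real.rpow_add hx0, Real.rpow_one]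
    rw [hxp, ha]
    ring
  have hJ : (∫ x in t₁..t₂, x * f x * Real.log (g x / (G t₂ - G t₁)))
      = a * (∫ x in t₁..t₂, x * f x) + (p - 1) * (∫ x in t₁..t₂, x * Real.log x * f x)
        - lam * θ * (∫ x in t₁..t₂, x ^ (p + 1) * f x) := by
    rw [intervalIntegral.integral_congr hJcongr,
        intervalIntegral.integral_sub ((hI1.const_mul _).add (hI2.const_mul _))
          (hI3.const_mul _),
        intervalIntegral.integral_add (hI1.const_mul _) (hI2.const_mul _),
        intervalIntegral.integral_const_mul, intervalIntegral.integral_const_mul,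
        intervalIntegral.integral_const_mul]
  have hdiv : (∫ x in t₁..t₂, x * (f x / (F t₂ - F t₁)) * Real.log (g x / (G t₂ - G t₁)))
      = (∫ x in t₁..t₂, x * f x * Real.log (g x / (G t₂ - G t₁))) / (F t₂ - F t₁) := by
    rw [← intervalIntegral.integral_div]
    apply intervalIntegral.integral_congr
    intro x _
    simp only
    ring
  rw [wInacc, gcm, hdiv, hJ, ha]
  ring
end

section
/- Let X follow Pareto-I with F(t) = 1 − (β/t)^α (t > β, α,β > 0) and Y satisfy the PHR model 1−G(t) = [1−F(t)]^θ, θ > 0. Then for β < t₁ < t₂: H^w_{X,Y}(t₁,t₂) + m_X(t₁,t₂) ln h₁^Y(t₁,t₂) = (αθ+1)[E(X ln X | t₁ < X < t₂) − m_X(t₁,t₂) ln t₁]. -/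
open MeasureTheory Real

theorem stmt18 (α β θ t₁ t₂ : ℝ) (hα : 0 < α) (hβ : 0 < β) (hθ : 0 < θ)
    (ht₁ : β < t₁) (ht : t₁ < t₂)
    -- X Pareto-I: F(t) = 1 - (β/t)^α for t > β
    (f F : ℝ → ℝ) (hF : F = fun x => 1 - (β / x) ^ α)
    (hf : f = fun x => α * β ^ α * x ^ (-α - 1))
    -- Y follows the PHR model: 1 - G = (1 - F)^θ
    (g G : ℝ → ℝ) (hG : G = fun x => 1 - (β / x) ^ (α * θ))
    (hg : g = fun x => α * θ * β ^ (α * θ) * x ^ (-(α * θ) - 1)) :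
    wInacc f F g G t₁ t₂ + gcm f F t₁ t₂ * Real.log (gfr₁ g G t₁ t₂)
      = (α * θ + 1) *
          ((∫ x in t₁..t₂, x * Real.log x * f x) / (F t₂ - F t₁)
            - gcm f F t₁ t₂ * Real.log t₁) := by
  subst hF hf hG hg
  have ht₁0 : 0 < t₁ := hβ.trans ht₁
  have ht₂0 : 0 < t₂ := ht₁0.trans ht
  have hIcc : Set.uIcc t₁ t₂ = Set.Icc t₁ t₂ := Set.uIcc_of_le ht.le
  have hxpos : ∀ x ∈ Set.uIcc t₁ t₂, 0 < x := by
    rw [hIcc]; intro x hx; exact ht₁0.trans_le hx.1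
  simp only [wInacc, gcm, gfr₁]
  set DG : ℝ := (1 - (β / t₂) ^ (α * θ)) - (1 - (β / t₁) ^ (α * θ)) with hDGdef
  set D : ℝ := (1 - (β / t₂) ^ α) - (1 - (β / t₁) ^ α) with hDdef
  have hDG : 0 < DG := by
    have h1 : (β / t₂) ^ (α * θ) < (β / t₁) ^ (α * θ) :=
      Real.rpow_lt_rpow (by positivity) (div_lt_div_of_pos_left hβ ht₁0 ht) (by positivity)
    simp only [hDGdef]; linarith
  have hgpos : ∀ x : ℝ, 0 < x → 0 < α * θ * β ^ (α * θ) * x ^ (-(α * θ) - 1) := by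
    intro x hx; positivity
  have hcpow : ∀ p : ℝ, ContinuousOn (fun x : ℝ => x ^ p) (Set.uIcc t₁ t₂) :=
    fun p => ContinuousOn.rpow_const continuousOn_id fun x hx => Or.inl (hxpos x hx).ne'
  -- integrability
  have hI2 : IntervalIntegrable (fun x => x * (α * β ^ α * x ^ (-α - 1))) volume t₁ t₂ := by
    apply ContinuousOn.intervalIntegrable
    exact continuousOn_id.mul (continuousOn_const.mul (hcpow _))
  have hI3 : IntervalIntegrable (fun x => x * Real.log x * (α * β ^ α * x ^ (-α - 1)))
      volume t₁ t₂ := by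
    apply ContinuousOn.intervalIntegrable
    exact (continuousOn_id.mul
      (Real.continuousOn_log.mono (fun x hx => (hxpos x hx).ne'))).mul
      (continuousOn_const.mul (hcpow _))
  have hI1 : IntervalIntegrable
      (fun x => x * (α * β ^ α * x ^ (-α - 1)) *
        Real.log (α * θ * β ^ (α * θ) * x ^ (-(α * θ) - 1) / DG)) volume t₁ t₂ := by
    apply ContinuousOn.intervalIntegrable
    apply ContinuousOn.mul
    · exact continuousOn_id.mul (continuousOn_const.mul (hcpow _))
    · apply ContinuousOn.log
      · exact (continuousOn_const.mul (hcpow _)).div_const DG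
      · intro x hx
        exact div_ne_zero (hgpos x (hxpos x hx)).ne' hDG.ne'
  -- numerator identity
  have key :
      -(∫ x in t₁..t₂, x * (α * β ^ α * x ^ (-α - 1)) *
          Real.log (α * θ * β ^ (α * θ) * x ^ (-(α * θ) - 1) / DG))
        + (∫ x in t₁..t₂, x * (α * β ^ α * x ^ (-α - 1))) *
          Real.log (α * θ * β ^ (α * θ) * t₁ ^ (-(α * θ) - 1) / DG)
      = (α * θ + 1) *
          ((∫ x in t₁..t₂, x * Real.log x * (α * β ^ α * x ^ (-α - 1)))
            - (∫ x in t₁..t₂, x * (α * β ^ α * x ^ (-α - 1))) * Real.log t₁) := by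
    rw [← intervalIntegral.integral_mul_const, neg_add_eq_sub,
      ← intervalIntegral.integral_sub (hI2.mul_const _) hI1]
    have hcongr : ∀ x ∈ Set.uIcc t₁ t₂,
        x * (α * β ^ α * x ^ (-α - 1)) *
            Real.log (α * θ * β ^ (α * θ) * t₁ ^ (-(α * θ) - 1) / DG)
          - x * (α * β ^ α * x ^ (-α - 1)) *
            Real.log (α * θ * β ^ (α * θ) * x ^ (-(α * θ) - 1) / DG)
        = (α * θ + 1) * (x * Real.log x * (α * β ^ α * x ^ (-α - 1))
            - x * (α * β ^ α * x ^ (-α - 1)) * Real.log t₁) := by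
      intro x hx
      have hx0 : 0 < x := hxpos x hx
      have hC : (0:ℝ) < α * θ * β ^ (α * θ) := by positivity
      rw [Real.log_div (hgpos x hx0).ne' hDG.ne', Real.log_div (hgpos t₁ ht₁0).ne' hDG.ne',
        Real.log_mul hC.ne' ((Real.rpow_pos_of_pos hx0 _).ne'),
        Real.log_mul hC.ne' ((Real.rpow_pos_of_pos ht₁0 _).ne'),
        Real.log_rpow hx0, Real.log_rpow ht₁0]
      ring
    rw [intervalIntegral.integral_congr hcongr]
    have : ∀ x : ℝ, (α * θ + 1) * (x * Real.log x * (α * β ^ α * x ^ (-α - 1))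
        - x * (α * β ^ α * x ^ (-α - 1)) * Real.log t₁)
      = (α * θ + 1) * (x * Real.log x * (α * β ^ α * x ^ (-α - 1)))
        - (α * θ + 1) * (x * (α * β ^ α * x ^ (-α - 1)) * Real.log t₁) := fun x => by ring
    simp_rw [this]
    rw [intervalIntegral.integral_sub ((hI3.const_mul _)) ((hI2.mul_const _).const_mul _),
      intervalIntegral.integral_const_mul, intervalIntegral.integral_const_mul,
      intervalIntegral.integral_mul_const]
    ring
  have expand : ∀ x : ℝ, x * (α * β ^ α * x ^ (-α - 1) / D) *
      Real.log (α * θ * β ^ (α * θ) * x ^ (-(α * θ) - 1) / DG)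
    = (x * (α * β ^ α * x ^ (-α - 1)) *
        Real.log (α * θ * β ^ (α * θ) * x ^ (-(α * θ) - 1) / DG)) / D := fun x => by ring
  simp_rw [expand]
  rw [intervalIntegral.integral_div]
  linear_combination key / D
end
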